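/- arXiv:1910.06815 — 3 statements merged into one kernel-verified Lean document; each statement's English description precedes it below -/
import Mathlib

section
/- Every local isometry g:X→Y from a geodesic metric space X into a CAT(0) space Y is an isometric embedding. -/
/-- `γ` is a geodesic from `x` to `y`, parametrized by arclength on `[0, dist x y]`. -/
def IsGeodesic {X : Type*} [MetricSpace X] (γ : ℝ → X) (x y : X) : Prop :=
  γ 0 = x ∧ γ (dist x y) = y ∧
    ∀ s ∈ Set.Icc (0 : ℝ) (dist x y), ∀ t ∈ Set.Icc (0 : ℝ) (dist x y),
      dist (γ s) (γ t) = |s - t|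

/-- A metric space is CAT(0) if it is geodesic and every geodesic triangle is at least as
thin as its Euclidean comparison triangle (expressed here by the equivalent comparison
inequality for a point and a geodesic side). -/
def IsCAT0 (X : Type*) [MetricSpace X] : Prop :=
  (∀ x y : X, ∃ γ : ℝ → X, IsGeodesic γ x y) ∧
  ∀ (x y z : X) (γ : ℝ → X), IsGeodesic γ x y →
    ∀ t ∈ Set.Icc (0 : ℝ) 1,
      dist z (γ (t * dist x y)) ^ 2 ≤
        (1 - t) * dist z x ^ 2 + t * dist z y ^ 2 - t * (1 - t) * dist x y ^ 2

/-- `g` is a local isometry: every point has a neighborhood on which `g` preserves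
distances. -/
def IsLocalIsometry {X Y : Type*} [MetricSpace X] [MetricSpace Y] (g : X → Y) : Prop :=
  ∀ x : X, ∃ ε > (0 : ℝ), ∀ a ∈ Metric.ball x ε, ∀ b ∈ Metric.ball x ε,
    dist (g a) (g b) = dist a b

/-!
Composing a geodesic from `a` to `b` with `g` gives a local geodesic `c` on `[0, d(a, b)]`, and
in a CAT(0) space local geodesics are geodesics. This is shown by continuous induction along
the interval: first `d(c 0, c v) ≤ v` by the triangle inequality; then, if `d(c 0, c x) = x`,
for small `δ` the point `c x` is the midpoint of `c (x - δ)` and `c (x + δ)`, and the CAT(0)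
inequality for this midpoint seen from `c 0` forces `d(c 0, c (x + δ)) ≥ x + δ`.
-/

open Set Filter Topology Metric

theorem IsCAT0.dist_sq_le_of_midpoint {Y : Type*} [MetricSpace Y] (hY : IsCAT0 Y)
    {x m y : Y} {δ : ℝ} (hxm : dist x m = δ) (hmy : dist m y = δ) (hxy : dist x y = 2 * δ)
    (z : Y) :
    dist z m ^ 2 ≤ dist z x ^ 2 / 2 + dist z y ^ 2 / 2 - δ ^ 2 := by
  obtain ⟨γ, hγ⟩ := hY.1 x y
  have hhalf : (1 / 2 : ℝ) ∈ Icc (0 : ℝ) 1 := by norm_num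
  have harg : 1 / 2 * dist x y = δ := by rw [hxy]; ring
  have hγm : γ δ = m := by
    have hm := hY.2 x y m γ hγ _ hhalf
    rw [harg, hxy, dist_comm m x, hxm, hmy] at hm
    have : dist m (γ δ) ^ 2 ≤ 0 := by linarith
    exact (dist_eq_zero.mp (pow_eq_zero_iff two_ne_zero |>.mp
      (le_antisymm this (sq_nonneg _)))).symm
  have hz := hY.2 x y z γ hγ _ hhalf
  rw [harg, hxy, hγm] at hz
  linarith

def IsLocalGeodesicOn {Y : Type*} [PseudoMetricSpace Y] (c : ℝ → Y) (s : Set ℝ) : Prop :=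
  ∀ u ∈ s, ∃ ε > 0, ∀ t₁ ∈ s ∩ ball u ε, ∀ t₂ ∈ s ∩ ball u ε, dist (c t₁) (c t₂) = dist t₁ t₂

theorem IsLocalIsometry.isLocalGeodesicOn_comp {X Y : Type*} [MetricSpace X] [MetricSpace Y]
    {g : X → Y} (hg : IsLocalIsometry g) {γ : ℝ → X} {x y : X} (hγ : IsGeodesic γ x y) :
    IsLocalGeodesicOn (g ∘ γ) (Icc 0 (dist x y)) := by
  intro u hu
  obtain ⟨ε, hε, hloc⟩ := hg (γ u)
  have hγ_ball : ∀ t ∈ Icc 0 (dist x y) ∩ ball u ε, γ t ∈ ball (γ u) ε := fun t ht => by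
    rw [mem_ball, hγ.2.2 t ht.1 u hu, ← Real.dist_eq]
    exact ht.2
  refine ⟨ε, hε, fun t₁ ht₁ t₂ ht₂ => ?_⟩
  rw [Function.comp_apply, Function.comp_apply, hloc _ (hγ_ball t₁ ht₁) _ (hγ_ball t₂ ht₂),
    hγ.2.2 t₁ ht₁.1 t₂ ht₂.1, Real.dist_eq]

namespace IsLocalGeodesicOn

variable {Y : Type*} [PseudoMetricSpace Y] {c : ℝ → Y}

theorem continuousOn {s : Set ℝ} (hc : IsLocalGeodesicOn c s) : ContinuousOn c s := by
  rw [Metric.continuousOn_iff]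
  intro u hu ε hε
  obtain ⟨δ, hδ, hloc⟩ := hc u hu
  refine ⟨min δ ε, lt_min hδ hε, fun t ht htu => ?_⟩
  rw [hloc t ⟨ht, htu.trans_le (min_le_left _ _)⟩ u ⟨hu, mem_ball_self hδ⟩]
  exact htu.trans_le (min_le_right _ _)

theorem exists_dist_eq_sub {s : Set ℝ} (hc : IsLocalGeodesicOn c s) {x : ℝ} (hx : x ∈ s) :
    ∃ ε > 0, ∀ t₁ ∈ s, ∀ t₂ ∈ s, x - ε < t₁ → t₁ ≤ t₂ → t₂ < x + ε →
      dist (c t₁) (c t₂) = t₂ - t₁ := by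
  obtain ⟨ε, hε, hloc⟩ := hc x hx
  refine ⟨ε, hε, fun t₁ ht₁ t₂ ht₂ hxt₁ ht₁₂ ht₂x => ?_⟩
  rw [hloc t₁ ⟨ht₁, ?_⟩ t₂ ⟨ht₂, ?_⟩, Real.dist_eq, abs_sub_comm, abs_of_nonneg (sub_nonneg.2 ht₁₂)]
  all_goals rw [Real.ball_eq_Ioo]; constructor <;> linarith

variable {a b : ℝ}

theorem dist_le_sub (hc : IsLocalGeodesicOn c (Icc a b)) :
    ∀ v ∈ Icc a b, dist (c a) (c v) ≤ v - a := by
  have hcont := hc.continuousOn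
  have hclosed : IsClosed ({v | dist (c a) (c v) ≤ v - a} ∩ Icc a b) := by
    rw [inter_comm]
    exact isClosed_Icc.isClosed_le (f := fun v => dist (c a) (c v)) (g := (· - a))
      (by fun_prop) (by fun_prop)
  refine fun v hv => hclosed.Icc_subset_of_forall_mem_nhdsWithin (by simp) ?_ hv
  rintro x ⟨hx : dist (c a) (c x) ≤ x - a, hxa, hxb⟩
  obtain ⟨ε, hε, hloc⟩ := hc.exists_dist_eq_sub ⟨hxa, hxb.le⟩
  filter_upwards [Ioo_mem_nhdsGT (lt_min (lt_add_of_pos_right x hε) hxb)] with v hv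
  obtain ⟨hxv, hvε, hvb⟩ : x < v ∧ v < x + ε ∧ v < b := by
    simpa only [mem_Ioo, lt_min_iff] using hv
  calc dist (c a) (c v) ≤ dist (c a) (c x) + dist (c x) (c v) := dist_triangle _ _ _
    _ ≤ (x - a) + (v - x) := by
      rw [hloc x ⟨hxa, hxb.le⟩ v ⟨by linarith, hvb.le⟩ (by linarith) hxv.le hvε]; linarith
    _ = v - a := by ring

end IsLocalGeodesicOn

theorem IsLocalGeodesicOn.dist_eq_sub_of_isCAT0 {Y : Type*} [MetricSpace Y] (hY : IsCAT0 Y)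
    {c : ℝ → Y} {a b : ℝ} (hc : IsLocalGeodesicOn c (Icc a b)) :
    ∀ v ∈ Icc a b, dist (c a) (c v) = v - a := by
  suffices ∀ v ∈ Icc a b, v - a ≤ dist (c a) (c v) from
    fun v hv => (hc.dist_le_sub v hv).antisymm (this v hv)
  have hcont := hc.continuousOn
  have hclosed : IsClosed ({v | v - a ≤ dist (c a) (c v)} ∩ Icc a b) := by
    rw [inter_comm]
    exact isClosed_Icc.isClosed_le (f := (· - a)) (g := fun v => dist (c a) (c v))
      (by fun_prop) (by fun_prop)
  refine fun v hv => hclosed.Icc_subset_of_forall_mem_nhdsWithin (by simp) ?_ hv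
  rintro x ⟨hx : x - a ≤ dist (c a) (c x), hxa, hxb⟩
  obtain ⟨ε, hε, hloc⟩ := hc.exists_dist_eq_sub ⟨hxa, hxb.le⟩
  rcases hxa.eq_or_lt with rfl | hax
  · filter_upwards [Ioo_mem_nhdsGT (lt_min (lt_add_of_pos_right a hε) hxb)] with v hv
    obtain ⟨hav, hvε, hvb⟩ : a < v ∧ v < a + ε ∧ v < b := by
      simpa only [mem_Ioo, lt_min_iff] using hv
    exact (hloc a ⟨le_rfl, hxb.le⟩ v ⟨hav.le, hvb.le⟩ (by linarith) hav.le hvε).ge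
  · filter_upwards [Ioo_mem_nhdsGT (lt_min (lt_min (lt_add_of_pos_right x hε)
      (lt_add_of_pos_right x (sub_pos.2 hax))) hxb)] with v hv
    obtain ⟨hxv, ⟨hvε, hva⟩, hvb⟩ : x < v ∧ (v < x + ε ∧ v < x + (x - a)) ∧ v < b := by
      simpa only [mem_Ioo, lt_min_iff] using hv
    -- `c x` is the midpoint of `c w` and `c v`, where `w` is the reflection of `v` in `x`
    set w := 2 * x - v
    have hw : w ∈ Icc a b := ⟨by linarith, by linarith⟩
    have hv : v ∈ Icc a b := ⟨by linarith, hvb.le⟩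
    have hmid := hY.dist_sq_le_of_midpoint (δ := v - x)
      ((hloc w hw x ⟨hxa, hxb.le⟩ (by linarith) (by linarith) (by linarith)).trans (by ring))
      (hloc x ⟨hxa, hxb.le⟩ v hv (by linarith) hxv.le hvε)
      ((hloc w hw v hv (by linarith) (by linarith) hvε).trans (by ring)) (c a)
    -- with `dist (c a) (c w) ≤ w - a`, `hmid` forces `dist (c a) (c v) ^ 2 ≥ (v - a) ^ 2`
    nlinarith [dist_nonneg (x := c a) (y := c w), dist_nonneg (x := c a) (y := c v),
      hc.dist_le_sub w hw, hc.dist_le_sub v hv]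

/-- Every local isometry from a geodesic metric space into a CAT(0) space is an
isometric embedding. -/
theorem localIsometry_to_cat0_isometric {X Y : Type*} [MetricSpace X] [MetricSpace Y]
    (hX : ∀ x y : X, ∃ γ : ℝ → X, IsGeodesic γ x y) (hY : IsCAT0 Y)
    (g : X → Y) (hg : IsLocalIsometry g) :
    ∀ a b : X, dist (g a) (g b) = dist a b := by
  intro a b
  obtain ⟨γ, hγ⟩ := hX a b
  have h := (hg.isLocalGeodesicOn_comp hγ).dist_eq_sub_of_isCAT0 hY (dist a b)
    ⟨dist_nonneg, le_rfl⟩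
  simpa only [Function.comp_apply, hγ.1, hγ.2.1, sub_zero] using h
end

section
/- Any map from the Euclidean plane ℝ² to the hyperbolic plane ℍ² is not a quasi-isometry. -/
open UpperHalfPlane Metric MeasureTheory Measure Module Filter Topology Real

/-!
`ℍ` has exponential growth while `ℝ²` has quadratic growth. The points `k s + i` (`k < N`) of a
horocycle are pairwise `δ`-separated for a suitable `s = s(δ)`, yet all lie within `2 log N + O(1)`
of each other. A quasi-isometry with `R`-dense image pulls them back to `N` points of `ℝ²` that are
`1/C`-separated and within `O(log N)` of each other, so comparing the area of disjoint balls gives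
`N = O(log² N)`, which fails for large `N`.
-/

theorem card_le_two_mul_div_add_one_pow_finrank {E : Type*} [NormedAddCommGroup E]
    [NormedSpace ℝ E] [FiniteDimensional ℝ E] {ι : Type*} [Fintype ι] [Nonempty ι]
    {x : ι → E} {ε ρ : ℝ} (hε : 0 < ε) (hsep : Pairwise fun i j => ε ≤ dist (x i) (x j))
    (hdiam : ∀ i j, dist (x i) (x j) ≤ ρ) :
    (Fintype.card ι : ℝ) ≤ (2 * ρ / ε + 1) ^ finrank ℝ E := by
  borelize E
  set μ : Measure E := Measure.addHaar
  obtain ⟨i₀⟩ := ‹Nonempty ι›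
  have hρ : 0 ≤ ρ := dist_nonneg.trans (hdiam i₀ i₀)
  have hr : 0 < ε / 2 := half_pos hε
  have hdisj : Pairwise (Function.onFun Disjoint fun i => ball (x i) (ε / 2)) :=
    fun i j hij => ball_disjoint_ball (by linarith [hsep hij])
  have hsub : ⋃ i, ball (x i) (ε / 2) ⊆ ball (x i₀) (ρ + ε / 2) :=
    Set.iUnion_subset fun i => ball_subset_ball' (by linarith [hdiam i i₀])
  have hvol : ∑ i, μ (ball (x i) (ε / 2)) ≤ μ (ball (x i₀) (ρ + ε / 2)) := by
    rw [← tsum_fintype (L := .unconditional _), ← measure_iUnion hdisj fun _ => measurableSet_ball]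
    exact measure_mono hsub
  simp only [addHaar_ball_of_pos μ _ hr, addHaar_ball_of_pos μ _ (by positivity : 0 < ρ + ε / 2),
    Finset.sum_const, Finset.card_univ, nsmul_eq_mul, ← mul_assoc] at hvol
  rw [ENNReal.mul_le_mul_iff_left (measure_ball_pos μ 0 one_pos).ne' measure_ball_lt_top.ne,
    ← ENNReal.ofReal_natCast, ← ENNReal.ofReal_mul (Nat.cast_nonneg _),
    ENNReal.ofReal_le_ofReal_iff (by positivity)] at hvol
  calc (Fintype.card ι : ℝ) ≤ (ρ + ε / 2) ^ finrank ℝ E / (ε / 2) ^ finrank ℝ E :=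
        (le_div_iff₀ (by positivity)).2 hvol
    _ = (2 * ρ / ε + 1) ^ finrank ℝ E := by rw [← div_pow]; congr 1; field_simp

theorem exists_nat_sq_add_mul_log_lt (A B : ℝ) : ∃ N : ℕ, (A + B * log N) ^ 2 < N := by
  have hlim : Tendsto (fun x => (A + B * log x) ^ 2 / x) atTop (𝓝 0) := by
    have h (n : ℕ) := tendsto_pow_log_div_mul_add_atTop 1 0 n one_ne_zero
    convert ((h 0).const_mul (A ^ 2)).add (((h 1).const_mul (2 * A * B)).add
      ((h 2).const_mul (B ^ 2))) using 1
    · ext x; ring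
    · simp
  obtain ⟨N, hN, hN0⟩ := (tendsto_natCast_atTop_atTop.eventually
    ((hlim.eventually (gt_mem_nhds one_pos)).and (eventually_gt_atTop 0))).exists
  exact ⟨N, (div_lt_one hN0).1 hN⟩

namespace UpperHalfPlane

theorem sinh_half_dist_vadd_I (a b : ℝ) : sinh (dist (a +ᵥ I) (b +ᵥ I) / 2) = |a - b| / 2 := by
  simp [sinh_half_dist, coe_vadd, Complex.dist_eq, ← Complex.ofReal_sub, Complex.norm_real]

theorem dist_vadd_I_le_two_mul_log (a b : ℝ) :
    dist (a +ᵥ I) (b +ᵥ I) ≤ 2 * log (1 + |a - b|) := by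
  have h : 0 < 1 + |a - b| := by positivity
  rw [← div_le_iff₀' two_pos, ← sinh_le_sinh, sinh_half_dist_vadd_I, sinh_log h]
  have := inv_le_one_of_one_le₀ (le_add_of_nonneg_right (abs_nonneg (a - b)))
  linarith

theorem le_dist_vadd_I {a b δ : ℝ} (h : 2 * sinh (δ / 2) ≤ |a - b|) :
    δ ≤ dist (a +ᵥ I) (b +ᵥ I) := by
  rw [← div_le_div_iff_of_pos_right two_pos, ← sinh_le_sinh, sinh_half_dist_vadd_I]
  linarith

theorem exists_separated_seq_dist_le_two_mul_log (δ : ℝ) :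
    ∃ (p : ℕ → ℍ) (K : ℝ), Pairwise (fun i j => δ ≤ dist (p i) (p j)) ∧
      ∀ N i j, i < N → j < N → dist (p i) (p j) ≤ 2 * log N + K := by
  set s := |2 * sinh (δ / 2)|
  have hs : 0 ≤ s := abs_nonneg _
  have abs_sub_mul (i j : ℕ) : |i * s - j * s| = |(i : ℝ) - j| * s := by
    rw [← sub_mul, abs_mul, abs_of_nonneg hs]
  refine ⟨fun k => (k * s) +ᵥ I, 2 * log (1 + s), fun i j hij => le_dist_vadd_I ?_,
    fun N i j hi hj => ?_⟩
  · have hij' : (1 : ℤ) ≤ |(i : ℤ) - j| := Int.one_le_abs (sub_ne_zero.2 (by exact_mod_cast hij))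
    rw [abs_sub_mul]
    calc 2 * sinh (δ / 2) ≤ s := le_abs_self _
      _ ≤ |(i : ℝ) - j| * s := le_mul_of_one_le_left hs (by exact_mod_cast hij')
  · have hN : (1 : ℝ) ≤ N := by exact_mod_cast (i.zero_le.trans_lt hi)
    have hij : |(i : ℝ) - j| ≤ N := abs_sub_le_of_nonneg_of_le (Nat.cast_nonneg i)
      (by exact_mod_cast hi.le) (Nat.cast_nonneg j) (by exact_mod_cast hj.le)
    calc dist _ _ ≤ 2 * log (1 + |i * s - j * s|) := dist_vadd_I_le_two_mul_log _ _
      _ ≤ 2 * log (N * (1 + s)) := by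
        rw [abs_sub_mul]; gcongr; linarith [mul_le_mul_of_nonneg_right hij hs]
      _ = 2 * log N + 2 * log (1 + s) := by
        rw [log_mul (by positivity) (by positivity)]; ring

end UpperHalfPlane

section CoarseMap

variable {X Y : Type*} [PseudoMetricSpace X] [PseudoMetricSpace Y] {f : X → Y} {x y : X}
  {p q : Y} {C D R : ℝ}

theorem dist_sub_le_mul_dist_of_dist_image_le (hf : dist (f x) (f y) ≤ C * dist x y + D)
    (hx : dist (f x) p ≤ R) (hy : dist (f y) q ≤ R) : dist p q - (2 * R + D) ≤ C * dist x y := by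
  linarith [dist_triangle4 p (f x) (f y) q, dist_comm p (f x)]

theorem dist_le_mul_dist_add_of_le_dist_image (hC : 0 < C)
    (hf : 1 / C * dist x y - D ≤ dist (f x) (f y)) (hx : dist (f x) p ≤ R)
    (hy : dist (f y) q ≤ R) : dist x y ≤ C * (dist p q + 2 * R + D) := by
  rw [one_div_mul_eq_div] at hf
  rw [← div_le_iff₀' hC]
  linarith [dist_triangle4 (f x) p q (f y), dist_comm (f y) q]

end CoarseMap

/-- No map from the Euclidean plane `ℝ²` to the hyperbolic plane `ℍ²` is a
quasi-isometry. -/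
theorem no_quasiIsometry_euclidean_to_hyperbolic
    (f : EuclideanSpace ℝ (Fin 2) → ℍ) :
    ¬ ∃ C D R : ℝ, 1 ≤ C ∧ 0 ≤ D ∧
        (∀ x y : EuclideanSpace ℝ (Fin 2),
          (1 / C) * dist x y - D ≤ dist (f x) (f y) ∧
          dist (f x) (f y) ≤ C * dist x y + D) ∧
        ∀ z : ℍ, ∃ x : EuclideanSpace ℝ (Fin 2), dist (f x) z ≤ R := by
  rintro ⟨C, D, R, hC, -, hf, hdense⟩
  have hC0 : 0 < C := one_pos.trans_le hC
  obtain ⟨p, K, hpsep, hpdiam⟩ := exists_separated_seq_dist_le_two_mul_log (2 * R + D + 1)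
  choose x hx using fun k => hdense (p k)
  obtain ⟨N, hN⟩ := exists_nat_sq_add_mul_log_lt (1 + 2 * C ^ 2 * (K + 2 * R + D)) (4 * C ^ 2)
  have : Nonempty (Fin N) := ⟨⟨0, by exact_mod_cast (sq_nonneg _).trans_lt hN⟩⟩
  have hsep : Pairwise fun i j : Fin N => 1 / C ≤ dist (x i) (x j) := fun i j hij => by
    have := dist_sub_le_mul_dist_of_dist_image_le (hf (x i) (x j)).2 (hx i) (hx j)
    refine (div_le_iff₀' hC0).2 ?_
    linarith [hpsep (Fin.val_injective.ne hij)]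
  have hdiam (i j : Fin N) : dist (x i) (x j) ≤ C * (2 * log N + K + 2 * R + D) := by
    refine (dist_le_mul_dist_add_of_le_dist_image hC0 (hf _ _).1 (hx i) (hx j)).trans ?_
    gcongr
    exact hpdiam N i j i.2 j.2
  have hcard := card_le_two_mul_div_add_one_pow_finrank (one_div_pos.2 hC0) hsep hdiam
  rw [Fintype.card_fin, finrank_euclideanSpace_fin] at hcard
  have : 2 * (C * (2 * log N + K + 2 * R + D)) / (1 / C) + 1 =
      1 + 2 * C ^ 2 * (K + 2 * R + D) + 4 * C ^ 2 * log N := by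
    field_simp
    ring
  linarith
end

section
/- Every finitely generated group has 0, 1, 2, or infinitely many ends; no finitely generated group has exactly m ends for any finite m ≥ 3. -/
/-- The Cayley graph of a group `G` with respect to a generating set `S`. -/
def cayleyGraph (G : Type*) [Group G] (S : Set G) : SimpleGraph G where
  Adj g h := g ≠ h ∧ ∃ s ∈ S, h = g * s ∨ h = g * s⁻¹
  symm := by
    constructor
    rintro a b ⟨hne, s, hS, hb | hb⟩
    · exact ⟨hne.symm, s, hS, Or.inr (by rw [hb]; group)⟩
    · exact ⟨hne.symm, s, hS, Or.inl (by rw [hb]; group)⟩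
  loopless := by constructor; rintro a ⟨hne, -⟩; exact hne rfl

/-!
Hopf's argument. For a connected, locally finite graph the number of ends is the supremum over
finite sets `K` of the number of infinite components of the complement of `K`. Suppose the graph
lives on a group and is invariant under left translations, and that this supremum is a finite
number `n ≥ 3`. Take a connected finite set `K ∋ 1` attaining it, an infinite component `C` of
its complement, and `g ∈ C` so far away that `gK` is disjoint from `K`. Then `gK ⊆ C`, and every
component of the complement of `gK` other than the one containing `K` lies inside `C`. Removing
`K ∪ gK` therefore leaves the `n - 1` infinite components of the complement of `K` that avoid
`C` together with `n - 1` infinite components inside `C`, and `2 (n - 1) > n`.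
-/

open CategoryTheory Opposite Pointwise

namespace SimpleGraph

section ComponentCompl

variable {V : Type*} {G : SimpleGraph V}

namespace ComponentCompl

variable {K L : Set V}

theorem connected_induce (C : G.ComponentCompl K) : (G.induce (C : Set V)).Connected := by
  classical
  obtain ⟨v, hv, rfl⟩ := C.exists_eq_mk
  refine G.induce_connected_of_patches v (G.componentComplMk_mem hv) fun {u} hu => ?_
  obtain ⟨huK, hu⟩ := hu
  obtain ⟨p⟩ := ConnectedComponent.exact hu.symm
  let q := p.map (Embedding.induce _).toHom
  refine ⟨{x | x ∈ q.support}, ?_, q.start_mem_support, q.end_mem_support,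
    q.connected_induce_support.preconnected _ _⟩
  intro x hx
  obtain ⟨y, hy, rfl⟩ := List.mem_map.mp ((p.support_map _).symm ▸ hx : x ∈ _)
  exact ⟨y.2, (ConnectedComponent.sound ⟨p.takeUntil y hy⟩).symm⟩

theorem subset_of_preconnected {s : Set V} (hs : (G.induce s).Preconnected) (hsK : Disjoint s K)
    {C : G.ComponentCompl K} {v : V} (hvs : v ∈ s) (hvC : v ∈ C) : s ⊆ C := by
  intro u hu
  have hsub : s ⊆ Kᶜ := hsK.subset_compl_right
  refine ⟨hsub hu, hvC.choose_spec ▸ ConnectedComponent.sound ?_⟩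
  exact (hs ⟨u, hu⟩ ⟨v, hvs⟩).map (G.induceHomOfLE hsub).toHom

theorem exists_coe_eq (hKL : K ⊆ L) (C : G.ComponentCompl K) (hCL : Disjoint (C : Set V) L) :
    ∃ D : G.ComponentCompl L, (D : Set V) = C := by
  obtain ⟨v, hv⟩ := C.nonempty
  have hvL : v ∉ L := hCL.notMem_of_mem_left hv
  refine ⟨G.componentComplMk hvL, subset_antisymm ?_ ?_⟩
  · have : (G.componentComplMk hvL).hom hKL = C := hv.choose_spec
    exact this ▸ (G.componentComplMk hvL).subset_hom hKL
  · exact subset_of_preconnected C.connected_induce.preconnected hCL hv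
      (G.componentComplMk_mem hvL)

/-- Every point outside `C` is joined to `K` avoiding `T`: either it lies in `K`, or its
component of `Kᶜ` is adjacent to `K`. -/
theorem subset_of_ne_componentComplMk (hG : G.Preconnected) {T : Set V}
    (hK : (G.induce K).Preconnected) (hKT : Disjoint K T) {C : G.ComponentCompl K}
    (hTC : T ⊆ C) {v : V} (hvK : v ∈ K) (F : G.ComponentCompl T)
    (hF : F ≠ G.componentComplMk (hKT.notMem_of_mem_left hvK)) : (F : Set V) ⊆ C := by
  set E := G.componentComplMk (hKT.notMem_of_mem_left hvK)
  have hCE : (C : Set V)ᶜ ⊆ E := by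
    intro u hu
    by_cases huK : u ∈ K
    · exact subset_of_preconnected hK hKT hvK (G.componentComplMk_mem _) huK
    set D := G.componentComplMk huK
    have hDC : Disjoint (D : Set V) C :=
      ComponentCompl.pairwise_disjoint fun h => hu (h ▸ G.componentComplMk_mem huK)
    obtain ⟨⟨c, k⟩, hc, hk, hck⟩ := D.exists_adj_boundary_pair hG ⟨v, hvK⟩
    have hDK : (G.induce ((D : Set V) ∪ K)).Connected :=
      G.connected_induce_union D.connected_induce.preconnected hK hc hk hck
    exact subset_of_preconnected hDK.preconnected ((hDC.mono_right hTC).union_left hKT)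
      (Or.inr hvK) (G.componentComplMk_mem _) (Or.inl (G.componentComplMk_mem huK))
  intro x hxF
  by_contra hxC
  exact Set.disjoint_left.mp (ComponentCompl.pairwise_disjoint hF) hxF (hCE hxC)

end ComponentCompl

variable (G) in
def infiniteComponentCompl (K : Set V) : Set (G.ComponentCompl K) :=
  {C | (C : Set V).Infinite}

/-- The infinite components of `Kᶜ` other than `C` and those of `Tᶜ` other than `E` are
themselves distinct components of `(K ∪ T)ᶜ`. -/
theorem ncard_sdiff_add_ncard_sdiff_le_ncard_infiniteComponentCompl_union
    [DecidableEq V] [LocallyFinite G] [Fact G.Preconnected] {K T : Finset V}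
    {C : G.ComponentCompl K} {E : G.ComponentCompl T}
    (hTC : (T : Set V) ⊆ C) (hE : ∀ F ≠ E, (F : Set V) ⊆ C) :
    (G.infiniteComponentCompl K \ {C}).ncard + (G.infiniteComponentCompl T \ {E}).ncard ≤
      (G.infiniteComponentCompl (K ∪ T : Finset V)).ncard := by
  have lift {M : Set V} (hM : M ⊆ (K ∪ T : Finset V)) (D : G.ComponentCompl M)
      (hD : D ∈ G.infiniteComponentCompl M) (hDKT : Disjoint (D : Set V) (K ∪ T : Finset V)) :
      (D : Set V) ∈ (↑) '' G.infiniteComponentCompl (K ∪ T : Finset V) := by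
    obtain ⟨D', hD'⟩ := ComponentCompl.exists_coe_eq hM D hDKT
    exact ⟨D', show (D' : Set V).Infinite from hD' ▸ hD, hD'⟩
  have hfromK : (↑) '' (G.infiniteComponentCompl K \ {C}) ⊆
      ((↑) '' G.infiniteComponentCompl (K ∪ T : Finset V) : Set (Set V)) := by
    rintro _ ⟨D, ⟨hD, hDC⟩, rfl⟩
    have hDC : Disjoint (D : Set V) C := ComponentCompl.pairwise_disjoint hDC
    refine lift (by simp) D hD ?_
    rw [Finset.coe_union]
    exact D.disjoint_right.symm.union_right (hDC.mono_right hTC)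
  have hfromT : (↑) '' (G.infiniteComponentCompl T \ {E}) ⊆
      ((↑) '' G.infiniteComponentCompl (K ∪ T : Finset V) : Set (Set V)) := by
    rintro _ ⟨F, ⟨hF, hFE⟩, rfl⟩
    refine lift (by simp) F hF ?_
    rw [Finset.coe_union]
    exact (C.disjoint_right.symm.mono_left (hE F hFE)).union_right F.disjoint_right.symm
  have hdisj : Disjoint ((↑) '' (G.infiniteComponentCompl K \ {C}) : Set (Set V))
      ((↑) '' (G.infiniteComponentCompl T \ {E})) := by
    rw [Set.disjoint_left]
    rintro _ ⟨D, ⟨-, hDC⟩, rfl⟩ ⟨F, ⟨-, hFE⟩, hFD⟩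
    obtain ⟨x, hx⟩ := F.nonempty
    exact Set.disjoint_left.mp (ComponentCompl.pairwise_disjoint hDC) (hFD ▸ hx) (hE F hFE hx)
  rw [← Set.ncard_image_of_injective (G.infiniteComponentCompl K \ {C}) SetLike.coe_injective,
    ← Set.ncard_image_of_injective (G.infiniteComponentCompl T \ {E}) SetLike.coe_injective,
    ← Set.ncard_image_of_injective (G.infiniteComponentCompl (K ∪ T : Finset V))
      SetLike.coe_injective, ← Set.ncard_union_eq hdisj]
  exact Set.ncard_le_ncard (Set.union_subset hfromK hfromT) (Set.toFinite _)

end ComponentCompl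

section Iso

variable {V V' : Type*} {G : SimpleGraph V} {G' : SimpleGraph V'}

def Iso.componentComplEquiv (φ : G ≃g G') (K : Set V) :
    G.ComponentCompl K ≃ G'.ComponentCompl (φ '' K) :=
  (φ.induce (φ.injective.bijOn_image.compl φ.bijective)).connectedComponentEquiv

theorem Iso.coe_componentComplEquiv (φ : G ≃g G') (K : Set V) (C : G.ComponentCompl K) :
    (φ.componentComplEquiv K C : Set V') = φ '' C := by
  induction C using ComponentCompl.ind with | _ hv => ?_
  ext w
  obtain ⟨u, rfl⟩ := φ.surjective w
  simp only [componentComplEquiv, SetLike.mem_coe, ComponentCompl.mem_supp_iff,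
    connectedComponentEquiv_apply, ConnectedComponent.map_mk, φ.injective.mem_set_image,
    ConnectedComponent.eq]
  exact exists_congr fun hu => Iso.reachable_iff
    (φ := φ.induce (φ.injective.bijOn_image.compl φ.bijective)) (u := ⟨u, hu⟩)

theorem Iso.componentComplEquiv_infinite_iff (φ : G ≃g G') (K : Set V)
    (C : G.ComponentCompl K) :
    (φ.componentComplEquiv K C : Set V').Infinite ↔ (C : Set V).Infinite := by
  rw [coe_componentComplEquiv, Set.infinite_image_iff φ.injective.injOn]

theorem Iso.ncard_infiniteComponentCompl (φ : G ≃g G') (K : Set V) :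
    (G'.infiniteComponentCompl (φ '' K)).ncard = (G.infiniteComponentCompl K).ncard := by
  rw [← Set.ncard_image_of_injective _ (φ.componentComplEquiv K).injective]
  congr 1
  ext D
  obtain ⟨C, rfl⟩ := (φ.componentComplEquiv K).surjective D
  simp only [infiniteComponentCompl, Set.mem_ofPred_eq,
    (φ.componentComplEquiv K).injective.mem_set_image, φ.componentComplEquiv_infinite_iff]

end Iso

section Ends

variable {V : Type*} (G : SimpleGraph V)

theorem card_toEventualRanges_obj (K : Finset V) :
    Nat.card (G.componentComplFunctor.toEventualRanges.obj (op K)) =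
      (G.infiniteComponentCompl K).ncard := by
  rw [Functor.toEventualRanges_obj, ← Nat.card_coe_set_eq]
  congr 3
  exact Set.ext fun C => (G.infinite_iff_in_eventualRange C).symm

def toEventualRangesSectionsEquivEnd :
    G.componentComplFunctor.toEventualRanges.sections ≃ G.end :=
  G.componentComplFunctor.toEventualRangesSectionsEquiv

instance [Finite G.end] : Finite G.componentComplFunctor.toEventualRanges.sections :=
  .of_equiv _ G.toEventualRangesSectionsEquivEnd.symm

instance [Nonempty G.end] (K : (Finset V)ᵒᵖ) :
    Nonempty (G.componentComplFunctor.toEventualRanges.obj K) :=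
  let ⟨e⟩ := G.toEventualRangesSectionsEquivEnd.symm.nonempty_congr.mp ‹_›
  ⟨e.val K⟩

variable [LocallyFinite G] [Fact G.Preconnected]

instance finite_componentComplFunctor_obj (K : (Finset V)ᵒᵖ) :
    Finite (G.componentComplFunctor.obj K) :=
  G.componentCompl_finite K.unop

theorem componentComplFunctor_isMittagLeffler : G.componentComplFunctor.IsMittagLeffler :=
  Functor.isMittagLeffler_of_exists_finite_range _ fun j => ⟨j, 𝟙 j, Set.toFinite _⟩

variable {G} in
theorem ncard_infiniteComponentCompl_mono {K L : Finset V} (hKL : K ⊆ L) :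
    (G.infiniteComponentCompl K).ncard ≤ (G.infiniteComponentCompl L).ncard := by
  rw [← card_toEventualRanges_obj, ← card_toEventualRanges_obj]
  exact Nat.card_le_card_of_surjective _
    (Functor.surjective_toEventualRanges _ G.componentComplFunctor_isMittagLeffler (opHomOfLE hKL))

variable [Finite G.end] [Nonempty G.end]

theorem ncard_infiniteComponentCompl_le_card_end (K : Finset V) :
    (G.infiniteComponentCompl K).ncard ≤ Nat.card G.end := by
  rw [← card_toEventualRanges_obj, ← Nat.card_congr G.toEventualRangesSectionsEquivEnd]
  exact Nat.card_le_card_of_surjective _ (Functor.eval_section_surjective_of_surjective _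
    (Functor.surjective_toEventualRanges _ G.componentComplFunctor_isMittagLeffler) (op K))

theorem exists_ncard_infiniteComponentCompl_eq_card_end :
    ∃ K : Finset V, (G.infiniteComponentCompl K).ncard = Nat.card G.end := by
  have Fsur := Functor.surjective_toEventualRanges _ G.componentComplFunctor_isMittagLeffler
  obtain ⟨j, hj⟩ := Functor.eventually_injective _ Fsur
  refine ⟨j.unop, ?_⟩
  rw [← card_toEventualRanges_obj, ← Nat.card_congr G.toEventualRangesSectionsEquivEnd]
  exact (Nat.card_eq_of_bijective _
    ⟨Functor.eval_section_injective_of_eventually_injective _ hj j (𝟙 j),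
      Functor.eval_section_surjective_of_surjective _ Fsur j⟩).symm

end Ends

section LeftInvariant

variable {G : Type*} [Group G] {Γ : SimpleGraph G}

def IsMulLeftInvariant (Γ : SimpleGraph G) : Prop :=
  ∀ g a b, Γ.Adj (g * a) (g * b) ↔ Γ.Adj a b

def IsMulLeftInvariant.mulLeftIso (hΓ : Γ.IsMulLeftInvariant) (g : G) : Γ ≃g Γ :=
  ⟨Equiv.mulLeft g, hΓ g _ _⟩

theorem IsMulLeftInvariant.preconnected_of_closure_eq_top (hΓ : Γ.IsMulLeftInvariant)
    {S : Set G} (hS : ∀ s ∈ S, Γ.Reachable 1 s) (hgen : Subgroup.closure S = ⊤) :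
    Γ.Preconnected := by
  have translate {a b : G} (g : G) (h : Γ.Reachable a b) : Γ.Reachable (g * a) (g * b) :=
    h.map (hΓ.mulLeftIso g).toHom
  suffices h1 : ∀ g, Γ.Reachable 1 g from fun u v => (h1 u).symm.trans (h1 v)
  intro g
  induction hgen ▸ Subgroup.mem_top g using Subgroup.closure_induction with
  | mem s hs => exact hS s hs
  | one => rfl
  | mul a b _ _ ha hb => exact ha.trans (by simpa using translate a hb)
  | inv a _ ha => exact (by simpa using translate a⁻¹ ha : Γ.Reachable a⁻¹ 1).symm

theorem IsMulLeftInvariant.exists_ncard_infiniteComponentCompl_gt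
    (hΓ : Γ.IsMulLeftInvariant) [LocallyFinite Γ] [Fact Γ.Preconnected]
    {K : Finset G} (hK : (Γ.induce (K : Set G)).Preconnected) (h1K : (1 : G) ∈ K)
    (h3 : 3 ≤ (Γ.infiniteComponentCompl K).ncard) :
    ∃ L : Finset G,
      (Γ.infiniteComponentCompl K).ncard < (Γ.infiniteComponentCompl L).ncard := by
  classical
  obtain ⟨C, hC⟩ := Set.nonempty_of_ncard_ne_zero (s := Γ.infiniteComponentCompl K) (by omega)
  obtain ⟨g, hgC, hgK⟩ := (hC.sdiff (K.finite_toSet.mul K.finite_toSet.inv)).nonempty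
  set φ := hΓ.mulLeftIso g
  set T := K.image φ
  have hTcoe : (T : Set G) = φ '' K := Finset.coe_image
  have hKT : Disjoint (K : Set G) T := by
    rw [hTcoe, Set.disjoint_left]
    rintro _ hx ⟨k, hk, rfl⟩
    exact hgK ⟨g * k, hx, k⁻¹, Set.inv_mem_inv.mpr hk, by simp⟩
  have hTconn : (Γ.induce (T : Set G)).Preconnected := by
    rw [hTcoe]
    exact (φ.induce (φ.injective.bijOn_image)).preconnected_iff.mp hK
  have hTC : (T : Set G) ⊆ C :=
    ComponentCompl.subset_of_preconnected hTconn hKT.symm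
      (hTcoe ▸ ⟨1, h1K, mul_one g⟩) hgC
  have hTn : (Γ.infiniteComponentCompl T).ncard = (Γ.infiniteComponentCompl K).ncard :=
    hTcoe ▸ φ.ncard_infiniteComponentCompl K
  have hcount := ncard_sdiff_add_ncard_sdiff_le_ncard_infiniteComponentCompl_union hTC
    (ComponentCompl.subset_of_ne_componentComplMk Fact.out hK hKT hTC h1K)
  have hC1 := Set.ncard_le_ncard_sdiff_add_ncard (Γ.infiniteComponentCompl K) {C}
  have hE1 := Set.ncard_le_ncard_sdiff_add_ncard (Γ.infiniteComponentCompl T)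
    {Γ.componentComplMk (hKT.notMem_of_mem_left h1K)}
  rw [Set.ncard_singleton] at hC1 hE1
  exact ⟨K ∪ T, by omega⟩

theorem IsMulLeftInvariant.card_end_le_two (hΓ : Γ.IsMulLeftInvariant)
    [LocallyFinite Γ] [Fact Γ.Preconnected] [Finite Γ.end] : Nat.card Γ.end ≤ 2 := by
  classical
  by_contra! h
  have : Nonempty Γ.end := (Nat.card_pos_iff.mp (by omega)).1
  obtain ⟨K₀, hK₀⟩ := Γ.exists_ncard_infiniteComponentCompl_eq_card_end
  obtain ⟨K, hK₀K, hK⟩ :=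
    Γ.extend_finset_to_connected Fact.out (Finset.insert_nonempty 1 K₀)
  have hKn : (Γ.infiniteComponentCompl K).ncard = Nat.card Γ.end :=
    (Γ.ncard_infiniteComponentCompl_le_card_end K).antisymm
      (hK₀ ▸ ncard_infiniteComponentCompl_mono ((Finset.subset_insert 1 K₀).trans hK₀K))
  obtain ⟨L, hL⟩ := hΓ.exists_ncard_infiniteComponentCompl_gt hK.preconnected
    (hK₀K (Finset.mem_insert_self 1 K₀)) (by omega)
  have := Γ.ncard_infiniteComponentCompl_le_card_end L
  omega

end LeftInvariant

end SimpleGraph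

theorem cayleyGraph_isMulLeftInvariant {G : Type*} [Group G] (S : Set G) :
    (cayleyGraph G S).IsMulLeftInvariant := by
  intro g a b
  simp [cayleyGraph, mul_assoc]

theorem cayleyGraph_reachable_one {G : Type*} [Group G] {S : Set G} {s : G} (hs : s ∈ S) :
    (cayleyGraph G S).Reachable 1 s := by
  by_cases h : 1 = s
  · exact h ▸ SimpleGraph.Reachable.refl 1
  · exact SimpleGraph.Adj.reachable ⟨h, s, hs, Or.inl (one_mul s).symm⟩

theorem cayleyGraph_neighborSet_finite {G : Type*} [Group G] {S : Set G} (hS : S.Finite)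
    (v : G) :
    ((cayleyGraph G S).neighborSet v).Finite := by
  refine ((hS.union hS.inv).image (v * ·)).subset ?_
  rintro w ⟨-, s, hs, rfl | rfl⟩
  · exact ⟨s, Or.inl hs, rfl⟩
  · exact ⟨s⁻¹, Or.inr (by simpa using hs), rfl⟩

/-- Hopf: every finitely generated group has `0`, `1`, `2` or infinitely many ends;
no finitely generated group has exactly `m` ends for a finite `m ≥ 3`. Here the ends
of `G` are the ends of a Cayley graph of `G` with respect to a finite generating
set. -/
theorem ends_of_group_zero_one_two_or_infinite {G : Type*} [Group G] (S : Set G)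
    (hfin : S.Finite) (hgen : Subgroup.closure S = ⊤) :
    Nat.card ((cayleyGraph G S).end) = 0 ∧ Finite ((cayleyGraph G S).end) ∨
    Nat.card ((cayleyGraph G S).end) = 1 ∨
    Nat.card ((cayleyGraph G S).end) = 2 ∨
    Infinite ((cayleyGraph G S).end) := by
  rcases finite_or_infinite (cayleyGraph G S).end with hfinEnd | hinfEnd
  · have : (cayleyGraph G S).LocallyFinite := fun v =>
      (cayleyGraph_neighborSet_finite hfin v).fintype
    have : Fact (cayleyGraph G S).Preconnected :=
      ⟨(cayleyGraph_isMulLeftInvariant S).preconnected_of_closure_eq_top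
        (fun _ => cayleyGraph_reachable_one) hgen⟩
    have hle := (cayleyGraph_isMulLeftInvariant S).card_end_le_two
    rcases (by omega : Nat.card (cayleyGraph G S).end = 0 ∨ Nat.card (cayleyGraph G S).end = 1 ∨
      Nat.card (cayleyGraph G S).end = 2) with h | h | h
    exacts [.inl ⟨h, hfinEnd⟩, .inr (.inl h), .inr (.inr (.inl h))]
  · exact .inr (.inr (.inr hinfEnd))
end
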